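/- Let G be a simple graph on a finite vertex set V, let d(v) denote the degree of v, and let m = Σ_{u∈V} d(u) be the number of directed edges. Let θ be a positive real number, let H = {v ∈ V : d(v) > θ}, and for v ∈ V let d^L(v) = |{w ∈ Γ(v) : d(w) ≤ θ}| be the number of light neighbors of v. Then θ²·Σ_{v∈H} d^L(v) ≥ (θ² − m)·Σ_{v∈H} d(v); equivalently, Σ_{v∈H} d^L(v) ≥ (1 − m/θ²)·Σ_{v∈H} d(v). -/
import Mathlib


theorem stmt_7 {V : Type*} [Fintype V] [DecidableEq V]
    (G : SimpleGraph V) [DecidableRel G.Adj] (θ : ℝ) (hθ : 0 < θ)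
    (m : ℝ) (hm : m = ∑ u, (G.degree u : ℝ))
    (H : Finset V) (hH : H = Finset.univ.filter (fun v => θ < G.degree v))
    (dL : V → ℕ)
    (hdL : ∀ v, dL v = ((G.neighborFinset v).filter (fun w => (G.degree w : ℝ) ≤ θ)).card) :
    θ ^ 2 * ∑ v ∈ H, (dL v : ℝ) ≥ (θ ^ 2 - m) * ∑ v ∈ H, (G.degree v : ℝ) := by
  have hkey : ∀ v, (G.degree v : ℝ) - dL v ≤ H.card := by
    intro v
    have h1 : dL v + ((G.neighborFinset v).filter
        (fun w => ¬ ((G.degree w : ℝ) ≤ θ))).card = G.degree v := by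
      rw [hdL, Finset.card_filter_add_card_filter_not,
        G.card_neighborFinset_eq_degree]
    have h2 : ((G.neighborFinset v).filter (fun w => ¬ ((G.degree w : ℝ) ≤ θ))) ⊆ H := by
      intro w hw
      simp only [Finset.mem_filter, not_le] at hw
      simp [hH, hw.2]
    have h3 := Finset.card_le_card h2
    have := h1 ▸ (Nat.cast_le.mpr (Nat.add_le_add_left h3 (dL v)) :
      ((dL v + _ : ℕ) : ℝ) ≤ (dL v + H.card : ℕ))
    push_cast at this ⊢
    linarith
  set S := ∑ v ∈ H, (G.degree v : ℝ) with hS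
  have hSm : S ≤ m := by
    rw [hm, hS]
    exact Finset.sum_le_sum_of_subset_of_nonneg (hH ▸ Finset.filter_subset _ _)
      (fun v _ _ => by positivity)
  have hθH : θ * H.card ≤ S := by
    have : ∀ v ∈ H, θ ≤ (G.degree v : ℝ) := by
      intro v hv
      rw [hH] at hv
      simp only [Finset.mem_filter] at hv
      exact le_of_lt hv.2
    calc θ * H.card = ∑ _v ∈ H, θ := by rw [Finset.sum_const, nsmul_eq_mul]; ring
      _ ≤ S := Finset.sum_le_sum this
  have hA : ∑ v ∈ H, ((G.degree v : ℝ) - dL v) ≤ (H.card : ℝ) * H.card := by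
    calc ∑ v ∈ H, ((G.degree v : ℝ) - dL v) ≤ ∑ _v ∈ H, (H.card : ℝ) :=
        Finset.sum_le_sum fun v _ => hkey v
      _ = (H.card : ℝ) * H.card := by rw [Finset.sum_const, nsmul_eq_mul]
  have hsplit : ∑ v ∈ H, ((G.degree v : ℝ) - dL v) = S - ∑ v ∈ H, (dL v : ℝ) := by
    rw [Finset.sum_sub_distrib, hS]
  have hHc : (0 : ℝ) ≤ H.card := Nat.cast_nonneg _
  have hS0 : (0 : ℝ) ≤ S := le_trans (by positivity) hθH
  nlinarith [mul_le_mul hθH (le_trans hθH hSm) (by positivity) hS0, sq_nonneg θ]
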